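/- arXiv:1007.0509 — 2 statements merged into one kernel-verified Lean document; each statement's English description precedes it below -/
import Mathlib

section
/- (Characterization of the contingent epiderivative as a lower Dini derivative) Let g : ℝ → ℝ be a function, t ∈ ℝ, and u ∈ ℝ. If v ∈ ℝ satisfies v = liminf_{h→0+, u'→u} (g(t + h u') − g(t))/h, then (u, v) belongs to the contingent cone to the epigraph Epi(g) at (t, g(t)), and moreover v = inf{w : (u, w) ∈ T_{Epi(g)}(t, g(t))}. -/
/-!
A point `(t + h u', y)` of the epigraph lies within `ε h` of `(t, g t) + h (u, w)` (sup distance)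
essentially when `|u' - u| < ε` and the difference quotient `(g (t + h u') - g t) / h` is below
`w + ε`. Hence `(u, w)` is contingent to the epigraph iff every set `diffQuots g t u ε` of
difference quotients with `h, |u' - u| < ε` has an element below `w + ε`. Since `v` is the limit of
the infima of these sets, this holds for `w = v`, and fails for `w < v` once the sets are bounded
below. If instead they are all unbounded below, `sInf` returns the junk value `0`, so `v = 0`,
while the slice of the cone is all of `ℝ`, whose `sInf` is again `0`.
-/

open Filter

noncomputable def contingentCone (K : Set (ℝ × ℝ)) (p : ℝ × ℝ) : Set (ℝ × ℝ) :=
  {v | Filter.liminf (fun h : ℝ => Metric.infDist (p + h • v) K / h)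
      (nhdsWithin 0 (Set.Ioi 0)) = 0}

def Epi (g : ℝ → ℝ) : Set (ℝ × ℝ) := {q | g q.1 ≤ q.2}

noncomputable def epider (g : ℝ → ℝ) (t u : ℝ) : EReal :=
  sInf {w : EReal | ∃ v : ℝ, w = (v : EReal) ∧ (u, v) ∈ contingentCone (Epi g) (t, g t)}

open Topology Set Metric

lemma liminf_eq_zero_iff_frequently_lt {α : Type*} {l : Filter α} [l.NeBot] {f : α → ℝ}
    (hf : ∀ᶠ x in l, 0 ≤ f x) (hbdd : IsBoundedUnder (· ≤ ·) l f) :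
    liminf f l = 0 ↔ ∀ δ > 0, ∃ᶠ x in l, f x < δ := by
  have hcobdd : IsCoboundedUnder (· ≥ ·) l f := hbdd.isCoboundedUnder_flip
  refine ⟨fun h δ hδ => frequently_lt_of_liminf_lt hcobdd (h ▸ hδ), fun H => ?_⟩
  refine le_antisymm (le_of_forall_pos_le_add fun δ hδ => ?_) (le_liminf_of_le hcobdd hf)
  simpa using liminf_le_of_frequently_le ((H δ hδ).mono fun _ => le_of_lt)
    (isBoundedUnder_of_eventually_ge hf)

lemma infDist_add_smul_le {E : Type*} [SeminormedAddCommGroup E] [NormedSpace ℝ E] {K : Set E}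
    {p : E} (hp : p ∈ K) (v : E) {h : ℝ} (hh : 0 ≤ h) :
    infDist (p + h • v) K ≤ h * ‖v‖ := by
  calc infDist (p + h • v) K ≤ infDist p K + dist (p + h • v) p := infDist_le_infDist_add_dist
    _ = h * ‖v‖ := by
      rw [infDist_zero_of_mem hp, dist_eq_norm, add_sub_cancel_left, norm_smul,
        Real.norm_of_nonneg hh, zero_add]

theorem mem_contingentCone_iff {K : Set (ℝ × ℝ)} {p v : ℝ × ℝ} (hp : p ∈ K) :
    v ∈ contingentCone K p ↔ ∀ ε > 0, ∃ h ∈ Ioo 0 ε, ∃ q ∈ K, dist (p + h • v) q < ε * h := by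
  have hf : ∀ᶠ h in 𝓝[>] (0 : ℝ), 0 ≤ infDist (p + h • v) K / h := by
    filter_upwards [self_mem_nhdsWithin] with h (hh : 0 < h)
    exact div_nonneg infDist_nonneg hh.le
  have hbdd : IsBoundedUnder (· ≤ ·) (𝓝[>] (0 : ℝ)) fun h => infDist (p + h • v) K / h := by
    refine isBoundedUnder_of_eventually_le (a := ‖v‖) ?_
    filter_upwards [self_mem_nhdsWithin] with h (hh : 0 < h)
    exact (div_le_iff₀' hh).2 (infDist_add_smul_le hp v hh.le)
  simp only [contingentCone, mem_ofPred_eq, liminf_eq_zero_iff_frequently_lt hf hbdd,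
    (nhdsGT_basis (0 : ℝ)).frequently_iff]
  constructor
  · intro H ε hε
    obtain ⟨h, hh, hlt⟩ := H ε hε ε hε
    rw [div_lt_iff₀ hh.1, infDist_lt_iff ⟨p, hp⟩] at hlt
    exact ⟨h, hh, hlt⟩
  · intro H δ hδ ε hε
    obtain ⟨h, hh, q, hq, hdist⟩ := H (min δ ε) (lt_min hδ hε)
    refine ⟨h, ⟨hh.1, hh.2.trans_le (min_le_right _ _)⟩, (div_lt_iff₀ hh.1).2 ?_⟩
    calc infDist (p + h • v) K ≤ dist (p + h • v) q := infDist_le_dist_of_mem hq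
      _ < min δ ε * h := hdist
      _ ≤ δ * h := mul_le_mul_of_nonneg_right (min_le_left δ ε) hh.1.le

def diffQuots (g : ℝ → ℝ) (t u ε : ℝ) : Set ℝ :=
  {r | ∃ h u', 0 < h ∧ h < ε ∧ |u' - u| < ε ∧ r = (g (t + h * u') - g t) / h}

section diffQuots

variable {g : ℝ → ℝ} {t u : ℝ}

lemma diffQuots_mono {ε₁ ε₂ : ℝ} (hε : ε₁ ≤ ε₂) : diffQuots g t u ε₁ ⊆ diffQuots g t u ε₂ := by
  rintro r ⟨h, u', hh, hhε, hu', rfl⟩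
  exact ⟨h, u', hh, hhε.trans_le hε, hu'.trans_le hε, rfl⟩

lemma diffQuots_nonempty {ε : ℝ} (hε : 0 < ε) : (diffQuots g t u ε).Nonempty :=
  ⟨_, ε / 2, u, half_pos hε, half_lt_self hε, by simpa using hε, rfl⟩

theorem mk_mem_contingentCone_epi_iff {w : ℝ} :
    (u, w) ∈ contingentCone (Epi g) (t, g t) ↔ ∀ ε > 0, ∃ r ∈ diffQuots g t u ε, r < w + ε := by
  rw [mem_contingentCone_iff (show (t, g t) ∈ Epi g from le_refl (g t))]
  refine forall₂_congr fun ε hε => ⟨?_, ?_⟩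
  · rintro ⟨h, ⟨hh, hhε⟩, ⟨x, y⟩, hxy, hdist⟩
    simp only [Prod.dist_eq, max_lt_iff, Real.dist_eq, Prod.smul_mk, smul_eq_mul,
      Prod.mk_add_mk] at hdist
    obtain ⟨hx, hy⟩ := hdist
    have hx' : t + h * ((x - t) / h) = x := by field_simp; ring
    refine ⟨(g x - g t) / h, ⟨h, (x - t) / h, hh, hhε, ?_, by rw [hx']⟩, ?_⟩
    · rw [show (x - t) / h - u = -(t + h * u - x) / h by field_simp; ring, abs_div, abs_neg,
        abs_of_pos hh, div_lt_iff₀ hh]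
      exact hx
    · have hgx : g x ≤ y := hxy
      rw [div_lt_iff₀ hh]
      linarith [(abs_lt.1 hy).1]
  · rintro ⟨r, ⟨h, u', hh, hhε, hu', rfl⟩, hr⟩
    rw [div_lt_iff₀ hh] at hr
    refine ⟨h, ⟨hh, hhε⟩, (t + h * u', max (g (t + h * u')) (g t + h * w)),
      show g _ ≤ _ from le_max_left _ _, ?_⟩
    simp only [Prod.dist_eq, max_lt_iff, Real.dist_eq, Prod.smul_mk, smul_eq_mul,
      Prod.mk_add_mk]
    constructor
    · rw [show t + h * u - (t + h * u') = h * (u - u') by ring, abs_mul, abs_of_pos hh,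
        abs_sub_comm, mul_comm]
      exact mul_lt_mul_of_pos_right hu' hh
    · rw [abs_sub_comm, abs_of_nonneg (by linarith [le_max_right (g (t + h * u')) (g t + h * w)])]
      rcases max_cases (g (t + h * u')) (g t + h * w) with ⟨hmax, -⟩ | ⟨hmax, -⟩ <;> rw [hmax]
      · linarith
      · simpa using mul_pos hε hh

variable {v : ℝ}
  (hv : Tendsto (fun ε => sInf (diffQuots g t u ε)) (𝓝[>] 0) (𝓝 v))
include hv

theorem mk_mem_contingentCone_epi_of_tendsto : (u, v) ∈ contingentCone (Epi g) (t, g t) := by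
  refine mk_mem_contingentCone_epi_iff.2 fun ε hε => ?_
  have hclose : ∀ᶠ ε' in 𝓝[>] (0 : ℝ), sInf (diffQuots g t u ε') < v + ε / 2 :=
    hv.eventually (eventually_lt_nhds (by linarith))
  obtain ⟨ε', ⟨hε', hε'ε⟩, hlt⟩ :=
    (Eventually.and (Ioo_mem_nhdsGT hε) hclose).exists
  obtain ⟨r, hr, hrlt⟩ := Real.lt_sInf_add_pos (diffQuots_nonempty hε') (half_pos hε)
  exact ⟨r, diffQuots_mono hε'ε.le hr, by linarith⟩

theorem le_of_mk_mem_contingentCone_epi {ε₀ w : ℝ} (hε₀ : 0 < ε₀)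
    (hbdd : BddBelow (diffQuots g t u ε₀)) (hw : (u, w) ∈ contingentCone (Epi g) (t, g t)) :
    v ≤ w := by
  have hlim : Tendsto (fun ε => sInf (diffQuots g t u ε) - ε) (𝓝[>] 0) (𝓝 v) := by
    simpa using hv.sub (tendsto_nhdsWithin_of_tendsto_nhds tendsto_id)
  refine le_of_tendsto hlim ?_
  filter_upwards [Ioo_mem_nhdsGT hε₀] with ε ⟨hε, hεε₀⟩
  obtain ⟨r, hr, hrw⟩ := mk_mem_contingentCone_epi_iff.1 hw ε hε
  linarith [csInf_le (hbdd.mono (diffQuots_mono hεε₀.le)) hr]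

end diffQuots

theorem epider_dini_char (g : ℝ → ℝ) (t u v : ℝ)
    (hv : Tendsto
      (fun ε : ℝ => sInf {r : ℝ | ∃ h u', 0 < h ∧ h < ε ∧ |u' - u| < ε ∧
        r = (g (t + h * u') - g t) / h})
      (nhdsWithin 0 (Set.Ioi 0)) (nhds v)) :
    (u, v) ∈ contingentCone (Epi g) (t, g t) ∧
      v = sInf {w : ℝ | (u, w) ∈ contingentCone (Epi g) (t, g t)} := by
  change Tendsto (fun ε => sInf (diffQuots g t u ε)) _ _ at hv
  have hcone := mk_mem_contingentCone_epi_of_tendsto hv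
  refine ⟨hcone, ?_⟩
  by_cases hbdd : ∃ ε₀ > 0, BddBelow (diffQuots g t u ε₀)
  · obtain ⟨ε₀, hε₀, hbdd⟩ := hbdd
    have hleast : IsLeast {w : ℝ | (u, w) ∈ contingentCone (Epi g) (t, g t)} v :=
      ⟨hcone, fun w hw => le_of_mk_mem_contingentCone_epi hv hε₀ hbdd hw⟩
    exact hleast.csInf_eq.symm
  · push Not at hbdd
    have hv0 : v = 0 := by
      refine tendsto_nhds_unique (hv.congr' ?_) tendsto_const_nhds
      filter_upwards [self_mem_nhdsWithin] with ε hε using Real.sInf_of_not_bddBelow (hbdd ε hε)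
    have huniv : {w : ℝ | (u, w) ∈ contingentCone (Epi g) (t, g t)} = univ := by
      refine eq_univ_of_forall fun w => mk_mem_contingentCone_epi_iff.2 fun ε hε => ?_
      obtain ⟨r, hr, hrw⟩ := not_bddBelow_iff.1 (hbdd ε hε) w
      exact ⟨r, hr, by linarith⟩
    rw [huniv, Real.sInf_univ, hv0]
end

section
/- If f : ℝ → ℝ is differentiable at t, then the contingent epiderivative of f at t satisfies D_↑f(t)(u) = u f'(t) for every u ∈ ℝ. -/
open Filter

/-!
If `(x, y) ∈ Epi f` lies within `ε h` of `(t + h u, f t + h v)`, the first-order expansion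
`f x ≥ f t + c (x - t) - ε |x - t|` at a point of differentiability gives `h c u ≤ h v + O(ε h)`;
so directions in the contingent cone satisfy `v ≥ c u`. Conversely, for `v ≥ c u` the point
`(t + h u, max (f (t + h u)) (f t + h v))` of the epigraph is at distance `o(h)`. Hence the
contingent cone is `{(u, v) | c u ≤ v}`, whose least height over `u` is `c u`.
-/

open Metric Topology

theorem infDist_le_max_sub (f : ℝ → ℝ) (x y : ℝ) :
    infDist (x, y) (Epi f) ≤ max (f x - y) 0 := by
  have hmem : (x, max (f x) y) ∈ Epi f := le_max_left (f x) y
  calc infDist (x, y) (Epi f) ≤ dist (x, y) (x, max (f x) y) := infDist_le_dist_of_mem hmem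
    _ = max (f x - y) 0 := by
      rw [Prod.dist_eq, dist_self, Real.dist_eq, abs_sub_comm, ← max_sub_sub_right, sub_self,
        abs_of_nonneg (le_max_right _ _)]
      exact max_eq_right (le_max_right _ _)

theorem frequently_infDist_lt_of_mem_contingentCone {K : Set (ℝ × ℝ)} {p v : ℝ × ℝ} (hp : p ∈ K)
    (hv : v ∈ contingentCone K p) {ε : ℝ} (hε : 0 < ε) :
    ∃ᶠ h in 𝓝[>] 0, infDist (p + h • v) K < ε * h := by
  -- `liminf` on `ℝ` is a junk value unless the quotient is bounded above; `p ∈ K` bounds it.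
  have hbdd : ∀ᶠ h in 𝓝[>] (0 : ℝ), infDist (p + h • v) K / h ≤ ‖v‖ := by
    filter_upwards [self_mem_nhdsWithin] with h (hh : 0 < h)
    rw [div_le_iff₀ hh]
    calc infDist (p + h • v) K ≤ dist (p + h • v) p := infDist_le_dist_of_mem hp
      _ = ‖v‖ * h := by simp [dist_eq_norm, norm_smul, abs_of_pos hh, mul_comm]
  have hliminf : liminf (fun h : ℝ => infDist (p + h • v) K / h) (𝓝[>] 0) = 0 := hv
  have hlt := frequently_lt_of_liminf_lt (isBoundedUnder_of_eventually_le hbdd).isCoboundedUnder_ge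
    (hliminf.trans_lt hε)
  exact (hlt.and_eventually self_mem_nhdsWithin).mono fun h ⟨hq, hh⟩ => (div_lt_iff₀ hh).1 hq

theorem mem_contingentCone_epi_of_le {f : ℝ → ℝ} {c t u v : ℝ} (hf : HasDerivAt f c t)
    (huv : u * c ≤ v) : (u, v) ∈ contingentCone (Epi f) (t, f t) := by
  have hslope : Tendsto (fun h : ℝ => h⁻¹ * (f (t + h * u) - f t)) (𝓝[>] 0) (𝓝 (u * c)) := by
    simpa using (hf.hasFDerivAt.hasLineDerivAt u).tendsto_slope_zero_right
  have hbound : Tendsto (fun h : ℝ => max (h⁻¹ * (f (t + h * u) - f t) - v) 0) (𝓝[>] 0) (𝓝 0) := by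
    simpa [max_eq_right (sub_nonpos.2 huv)] using
      (hslope.sub_const v).max (tendsto_const_nhds (x := (0 : ℝ)))
  refine Tendsto.liminf_eq (tendsto_of_tendsto_of_tendsto_of_le_of_le' tendsto_const_nhds hbound
    ?_ ?_)
  · filter_upwards [self_mem_nhdsWithin] with h (hh : 0 < h)
    exact div_nonneg infDist_nonneg hh.le
  · filter_upwards [self_mem_nhdsWithin] with h (hh : 0 < h)
    rw [div_le_iff₀ hh, max_mul_of_nonneg _ _ hh.le, zero_mul]
    calc infDist ((t, f t) + h • (u, v)) (Epi f) = infDist (t + h * u, f t + h * v) (Epi f) := by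
          simp
      _ ≤ max (f (t + h * u) - (f t + h * v)) 0 := infDist_le_max_sub f _ _
      _ = max ((h⁻¹ * (f (t + h * u) - f t) - v) * h) 0 := by
          congr 1; field_simp; ring

theorem le_add_of_mem_contingentCone_epi {f : ℝ → ℝ} {c t u v : ℝ} (hf : HasDerivAt f c t)
    (hmem : (u, v) ∈ contingentCone (Epi f) (t, f t)) {ε : ℝ} (hε : 0 < ε) :
    u * c ≤ v + ε * (1 + ε + |u| + |c|) := by
  obtain ⟨r, hr, hlin⟩ := Metric.eventually_nhds_iff.1 (hf.isLittleO.bound hε)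
  have hsmall : ∀ᶠ h in 𝓝[>] (0 : ℝ), h * (|u| + ε) < r :=
    nhdsWithin_le_nhds <| ((continuous_id.mul continuous_const).tendsto' 0 0
      (zero_mul _)).eventually (eventually_lt_nhds hr)
  obtain ⟨h, hdist, hhr, hh : 0 < h⟩ := ((frequently_infDist_lt_of_mem_contingentCone
    (le_refl (f t)) hmem hε).and_eventually (hsmall.and self_mem_nhdsWithin)).exists
  obtain ⟨⟨x, y⟩, hfxy : f x ≤ y, hxy⟩ :=
    (infDist_lt_iff (s := Epi f) ⟨(t, f t), le_refl (f t)⟩).1 hdist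
  simp only [Prod.dist_eq, Prod.fst_add, Prod.snd_add, Prod.smul_fst, Prod.smul_snd, smul_eq_mul,
    Real.dist_eq, max_lt_iff] at hxy
  obtain ⟨hx, hy⟩ := hxy
  have hxt : |x - t| ≤ h * (|u| + ε) := calc
    |x - t| = |h * u - (t + h * u - x)| := by ring_nf
    _ ≤ |h * u| + |t + h * u - x| := abs_sub _ _
    _ ≤ h * (|u| + ε) := by rw [abs_mul, abs_of_pos hh]; linarith
  have hfx : (x - t) * c ≤ f x - f t + ε * |x - t| := by
    have := hlin (show dist x t < r by rw [Real.dist_eq]; linarith)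
    simp only [smul_eq_mul, Real.norm_eq_abs] at this
    linarith [(abs_le.1 this).1]
  have hcx : (t + h * u - x) * c ≤ ε * h * |c| := calc
    (t + h * u - x) * c ≤ |t + h * u - x| * |c| := by rw [← abs_mul]; exact le_abs_self _
    _ ≤ ε * h * |c| := by gcongr
  have hεx : ε * |x - t| ≤ ε * (h * (|u| + ε)) := by gcongr
  have key : h * (u * c) < h * (v + ε * (1 + ε + |u| + |c|)) := by
    linarith [(abs_lt.1 hy).1]
  exact (lt_of_mul_lt_mul_left key hh.le).le

theorem mem_contingentCone_epi_iff {f : ℝ → ℝ} {c t u v : ℝ} (hf : HasDerivAt f c t) :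
    (u, v) ∈ contingentCone (Epi f) (t, f t) ↔ u * c ≤ v := by
  refine ⟨fun hmem => ?_, mem_contingentCone_epi_of_le hf⟩
  have hlim : Tendsto (fun ε : ℝ => v + ε * (1 + ε + |u| + |c|)) (𝓝[>] 0) (𝓝 v) :=
    tendsto_nhdsWithin_of_tendsto_nhds ((by fun_prop : Continuous fun ε : ℝ =>
      v + ε * (1 + ε + |u| + |c|)).tendsto' 0 v (by simp))
  exact ge_of_tendsto hlim (eventually_nhdsWithin_of_forall fun ε hε =>
    le_add_of_mem_contingentCone_epi hf hmem hε)

theorem epider_of_differentiable (f : ℝ → ℝ) (t : ℝ)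
    (hf : DifferentiableAt ℝ f t) (u : ℝ) :
    epider f t u = ((u * deriv f t : ℝ) : EReal) := by
  have hcone := fun v => mem_contingentCone_epi_iff (u := u) (v := v) hf.hasDerivAt
  refine IsLeast.csInf_eq ⟨⟨_, rfl, (hcone _).2 le_rfl⟩, ?_⟩
  rintro _ ⟨v, rfl, hv⟩
  exact EReal.coe_le_coe_iff.2 ((hcone v).1 hv)
end
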